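/- arXiv:2411.03947 — 6 statements merged into one kernel-verified Lean document; each statement's English description precedes it below -/
import Mathlib

section
/- Let S and T be semigroups such that for all R-incomparable elements u, v ∈ T there exist elements a, b ∈ S and a semigroup homomorphism φ : S → T such that φ(a) = u, φ(b) = v and φ(aS ∩ bS) = uT ∩ vT. If S is right ideal Howson, then so is T. -/
/-- `XS¹ = X ∪ XS` for a subset `X` of a semigroup `S`. -/
def RS1 {S : Type*} [Semigroup S] (X : Set S) : Set S :=
  X ∪ {y | ∃ x ∈ X, ∃ s : S, y = x * s}

/-- A finitely generated right ideal: a set of the form `XS¹` with `X` finite. -/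
def FGRightIdeal {S : Type*} [Semigroup S] (I : Set S) : Prop :=
  ∃ X : Finset S, I = RS1 (↑X : Set S)

/-- A semigroup is right ideal Howson if the intersection of any two finitely
generated right ideals is finitely generated. -/
def RIH (S : Type*) [Semigroup S] : Prop :=
  ∀ I J : Set S, FGRightIdeal I → FGRightIdeal J → FGRightIdeal (I ∩ J)

/-!
`XT¹ ∩ YT¹` is the union of the finitely many `xT¹ ∩ yT¹` with `x ∈ X`, `y ∈ Y`, and a finite union
of finitely generated right ideals is finitely generated, so it suffices to treat principal right
ideals. If `u` and `v` are `R`-comparable, `uT¹ ∩ vT¹` is the smaller of the two. Otherwise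
`uT¹ ∩ vT¹ = uT ∩ vT = φ(aS ∩ bS)`, where `a`, `b` are again incomparable (homomorphisms preserve
`R`-comparability), so `aS ∩ bS = aS¹ ∩ bS¹ = XS¹` for a finite `X`. Since `φ(XS¹)` is a right
ideal of `T` containing `φ(X)`, it equals `φ(X)T¹`.
-/

def IsRightIdeal {S : Type*} [Semigroup S] (I : Set S) : Prop :=
  ∀ x ∈ I, ∀ s : S, x * s ∈ I

section

variable {S T : Type*} [Semigroup S] [Semigroup T]

lemma IsRightIdeal.inter {I J : Set S} (hI : IsRightIdeal I) (hJ : IsRightIdeal J) :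
    IsRightIdeal (I ∩ J) :=
  fun x hx s => ⟨hI x hx.1 s, hJ x hx.2 s⟩

lemma isRightIdeal_setOf_eq_mul (u : S) : IsRightIdeal {y | ∃ s : S, y = u * s} := by
  rintro _ ⟨s, rfl⟩ s'
  exact ⟨s * s', mul_assoc u s s'⟩

lemma subset_RS1 (X : Set S) : X ⊆ RS1 X := Set.subset_union_left

lemma isRightIdeal_RS1 (X : Set S) : IsRightIdeal (RS1 X) := by
  rintro _ (hx | ⟨x, hx, s, rfl⟩) s'
  · exact Or.inr ⟨_, hx, s', rfl⟩
  · exact Or.inr ⟨x, hx, s * s', mul_assoc x s s'⟩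

lemma RS1_subset_of_isRightIdeal {X I : Set S} (hI : IsRightIdeal I) (hX : X ⊆ I) :
    RS1 X ⊆ I := by
  rintro _ (hx | ⟨x, hx, s, rfl⟩)
  · exact hX hx
  · exact hI x (hX hx) s

lemma RS1_singleton (u : S) : RS1 ({u} : Set S) = {u} ∪ {y | ∃ s : S, y = u * s} := by
  simp [RS1]

lemma RS1_singleton_subset_of_mem {u : S} {X : Set S} (hu : u ∈ RS1 X) :
    RS1 {u} ⊆ RS1 X :=
  RS1_subset_of_isRightIdeal (isRightIdeal_RS1 X) (Set.singleton_subset_iff.mpr hu)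

lemma RS1_eq_biUnion (X : Set S) : RS1 X = ⋃ x ∈ X, RS1 {x} := by
  ext z
  simp only [RS1, Set.mem_union, Set.mem_ofPred_eq, Set.mem_iUnion, Set.mem_singleton_iff,
    exists_eq_left, exists_prop]
  constructor
  · rintro (hz | ⟨x, hx, s, rfl⟩)
    exacts [⟨z, hz, Or.inl rfl⟩, ⟨x, hx, Or.inr ⟨s, rfl⟩⟩]
  · rintro ⟨x, hx, rfl | ⟨s, rfl⟩⟩
    exacts [Or.inl hx, Or.inr ⟨x, hx, s, rfl⟩]

lemma RS1_union (X Y : Set S) : RS1 (X ∪ Y) = RS1 X ∪ RS1 Y := by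
  simp only [RS1_eq_biUnion X, RS1_eq_biUnion Y, RS1_eq_biUnion (X ∪ Y), Set.biUnion_union]

lemma RS1_inter_RS1 (X Y : Set S) :
    RS1 X ∩ RS1 Y = ⋃ x ∈ X, ⋃ y ∈ Y, RS1 {x} ∩ RS1 {y} := by
  rw [RS1_eq_biUnion X, RS1_eq_biUnion Y, Set.iUnion₂_inter]
  simp only [Set.inter_iUnion₂]

lemma RS1_singleton_inter_eq_of_incomparable {u v : S} (huv : u ∉ RS1 {v}) (hvu : v ∉ RS1 {u}) :
    RS1 {u} ∩ RS1 {v} = {y | ∃ s : S, y = u * s} ∩ {y | ∃ s : S, y = v * s} := by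
  rw [RS1_singleton] at huv hvu
  rw [RS1_singleton, RS1_singleton, Set.union_inter_distrib_right, Set.inter_union_distrib_left,
    Set.inter_union_distrib_left, Set.singleton_inter_eq_empty.mpr (fun h => huv (.inl h)),
    Set.singleton_inter_eq_empty.mpr (fun h => huv (.inr h)),
    Set.inter_singleton_eq_empty.mpr (fun h => hvu (.inr h))]
  simp

lemma image_RS1_subset (φ : S →ₙ* T) (X : Set S) : φ '' RS1 X ⊆ RS1 (φ '' X) := by
  rintro _ ⟨_, hx | ⟨x, hx, s, rfl⟩, rfl⟩
  · exact Or.inl ⟨_, hx, rfl⟩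
  · exact Or.inr ⟨φ x, ⟨x, hx, rfl⟩, φ s, map_mul φ x s⟩

lemma map_mem_RS1_singleton (φ : S →ₙ* T) {a b : S} (h : a ∈ RS1 {b}) : φ a ∈ RS1 {φ b} := by
  simpa using image_RS1_subset φ {b} ⟨a, h, rfl⟩

lemma image_RS1_eq_of_isRightIdeal (φ : S →ₙ* T) {X : Set S}
    (h : IsRightIdeal (φ '' RS1 X)) : φ '' RS1 X = RS1 (φ '' X) :=
  (image_RS1_subset φ X).antisymm
    (RS1_subset_of_isRightIdeal h (Set.image_mono (subset_RS1 X)))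

lemma fgRightIdeal_RS1_singleton (u : S) : FGRightIdeal (RS1 ({u} : Set S)) :=
  ⟨{u}, by rw [Finset.coe_singleton]⟩

namespace FGRightIdeal

lemma union {I J : Set S} (hI : FGRightIdeal I) (hJ : FGRightIdeal J) :
    FGRightIdeal (I ∪ J) := by
  classical
  obtain ⟨X, rfl⟩ := hI
  obtain ⟨Y, rfl⟩ := hJ
  exact ⟨X ∪ Y, by rw [Finset.coe_union, RS1_union]⟩

lemma biUnion {ι : Type*} (A : Finset ι) {f : ι → Set S} (hf : ∀ i ∈ A, FGRightIdeal (f i)) :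
    FGRightIdeal (⋃ i ∈ A, f i) := by
  classical
  induction A using Finset.induction_on with
  | empty => exact ⟨∅, by simp [RS1]⟩
  | insert i A _ ih =>
    rw [Finset.set_biUnion_insert]
    exact (hf i (A.mem_insert_self i)).union
      (ih fun j hj => hf j (Finset.mem_insert_of_mem hj))

lemma image_of_isRightIdeal (φ : S →ₙ* T) {I : Set S} (hI : FGRightIdeal I)
    (h : IsRightIdeal (φ '' I)) : FGRightIdeal (φ '' I) := by
  classical
  obtain ⟨X, rfl⟩ := hI
  exact ⟨X.image φ, by rw [Finset.coe_image, image_RS1_eq_of_isRightIdeal φ h]⟩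

lemma RS1_singleton_inter_of_incomparable (hS : RIH S) (φ : S →ₙ* T) {a b : S} {u v : T}
    (ha : φ a = u) (hb : φ b = v)
    (himg : φ '' ({y | ∃ s : S, y = a * s} ∩ {y | ∃ s : S, y = b * s}) =
      {y | ∃ t : T, y = u * t} ∩ {y | ∃ t : T, y = v * t})
    (huv : u ∉ RS1 {v}) (hvu : v ∉ RS1 {u}) : FGRightIdeal (RS1 {u} ∩ RS1 {v}) := by
  subst ha hb
  have hab : a ∉ RS1 {b} := fun h => huv (map_mem_RS1_singleton φ h)
  have hba : b ∉ RS1 {a} := fun h => hvu (map_mem_RS1_singleton φ h)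
  have hfg := hS _ _ (fgRightIdeal_RS1_singleton a) (fgRightIdeal_RS1_singleton b)
  rw [RS1_singleton_inter_eq_of_incomparable hab hba] at hfg
  rw [RS1_singleton_inter_eq_of_incomparable huv hvu, ← himg]
  refine hfg.image_of_isRightIdeal φ ?_
  rw [himg]
  exact (isRightIdeal_setOf_eq_mul _).inter (isRightIdeal_setOf_eq_mul _)

lemma RS1_singleton_inter (hS : RIH S)
    (h : ∀ u v : T, u ∉ RS1 {v} → v ∉ RS1 {u} →
      ∃ (a b : S) (φ : S →ₙ* T), φ a = u ∧ φ b = v ∧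
        φ '' ({y | ∃ s : S, y = a * s} ∩ {y | ∃ s : S, y = b * s}) =
          {y | ∃ t : T, y = u * t} ∩ {y | ∃ t : T, y = v * t})
    (u v : T) : FGRightIdeal (RS1 {u} ∩ RS1 {v}) := by
  by_cases huv : u ∈ RS1 {v}
  · rw [Set.inter_eq_left.mpr (RS1_singleton_subset_of_mem huv)]
    exact fgRightIdeal_RS1_singleton u
  by_cases hvu : v ∈ RS1 {u}
  · rw [Set.inter_eq_right.mpr (RS1_singleton_subset_of_mem hvu)]
    exact fgRightIdeal_RS1_singleton v
  obtain ⟨a, b, φ, ha, hb, himg⟩ := h u v huv hvu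
  exact RS1_singleton_inter_of_incomparable hS φ ha hb himg huv hvu

end FGRightIdeal

end

theorem stmt0 {S T : Type*} [Semigroup S] [Semigroup T]
    (h : ∀ u v : T,
      u ∉ ({v} ∪ {y | ∃ t : T, y = v * t} : Set T) →
      v ∉ ({u} ∪ {y | ∃ t : T, y = u * t} : Set T) →
      ∃ (a b : S) (φ : S →ₙ* T), φ a = u ∧ φ b = v ∧
        φ '' ({y | ∃ s : S, y = a * s} ∩ {y | ∃ s : S, y = b * s}) =
          {y | ∃ t : T, y = u * t} ∩ {y | ∃ t : T, y = v * t})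
    (hS : RIH S) : RIH T := by
  simp only [← RS1_singleton] at h
  rintro _ _ ⟨A, rfl⟩ ⟨B, rfl⟩
  rw [RS1_inter_RS1]
  exact FGRightIdeal.biUnion A fun u _ => FGRightIdeal.biUnion B fun v _ =>
    FGRightIdeal.RS1_singleton_inter hS h u v
end

section
/- Let S be a semigroup and let I be a two-sided ideal of S. Then the Rees quotient S/I (the quotient of S by the congruence ρ_I defined by (a,b) ∈ ρ_I iff a = b or both a ∈ I and b ∈ I) is right ideal Howson whenever S is right ideal Howson. -/
/-!
A finitely generated right ideal of `S/I` is the image of one of `S` (lift its generators), and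
images of finitely generated right ideals are finitely generated. The quotient map is injective
outside `I`, so the intersection of two images is the image of the intersection, up to the zero
`I` of `S/I`; adding a left zero to a finitely generated right ideal keeps it finitely generated.
-/

open Function

section RS1

variable {S T : Type*} [Semigroup S] [Semigroup T]

lemma image_RS1 (f : S →ₙ* T) (hf : Surjective f) (W : Set S) :
    f '' RS1 W = RS1 (f '' W) := by
  ext q
  constructor
  · rintro ⟨a, ha | ⟨x, hx, s, rfl⟩, rfl⟩
    · exact Or.inl ⟨a, ha, rfl⟩
    · exact Or.inr ⟨f x, ⟨x, hx, rfl⟩, f s, map_mul f x s⟩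
  · rintro (⟨a, ha, rfl⟩ | ⟨_, ⟨x, hx, rfl⟩, t, rfl⟩)
    · exact ⟨a, Or.inl ha, rfl⟩
    · obtain ⟨s, rfl⟩ := hf t
      exact ⟨x * s, Or.inr ⟨x, hx, s, rfl⟩, map_mul f x s⟩

lemma RS1_insert_of_left_zero [DecidableEq S] {z : S} (hz : ∀ s, z * s = z) (W : Set S) :
    RS1 (insert z W) = insert z (RS1 W) := by
  ext a
  constructor
  · rintro (ha | ⟨x, hx | hx, s, rfl⟩)
    · exact ha.imp id Or.inl
    · exact Or.inl (hx ▸ hz s)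
    · exact Or.inr (Or.inr ⟨x, hx, s, rfl⟩)
  · rintro (rfl | ha | ⟨x, hx, s, rfl⟩)
    · exact Or.inl (Set.mem_insert a W)
    · exact Or.inl (Set.mem_insert_of_mem z ha)
    · exact Or.inr ⟨x, Set.mem_insert_of_mem z hx, s, rfl⟩

namespace FGRightIdeal

lemma image (f : S →ₙ* T) (hf : Surjective f) {I : Set S} (hI : FGRightIdeal I) :
    FGRightIdeal (f '' I) := by
  classical
  obtain ⟨X, rfl⟩ := hI
  exact ⟨X.image f, by rw [image_RS1 f hf, Finset.coe_image]⟩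

lemma exists_image_eq (f : S →ₙ* T) (hf : Surjective f) {J : Set T} (hJ : FGRightIdeal J) :
    ∃ I : Set S, FGRightIdeal I ∧ f '' I = J := by
  classical
  obtain ⟨Y, rfl⟩ := hJ
  refine ⟨RS1 ↑(Y.image (surjInv hf)), ⟨_, rfl⟩, ?_⟩
  rw [image_RS1 f hf, Finset.coe_image, ← Set.image_comp,
    (rightInverse_surjInv hf).comp_eq_id, Set.image_id]

lemma insert_of_left_zero {z : S} (hz : ∀ s, z * s = z) {I : Set S} (hI : FGRightIdeal I) :
    FGRightIdeal (insert z I) := by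
  classical
  obtain ⟨X, rfl⟩ := hI
  exact ⟨insert z X, by rw [Finset.coe_insert, RS1_insert_of_left_zero hz]⟩

end FGRightIdeal

end RS1

lemma Set.image_inter_subset_insert {α β : Type*} (f : α → β) {z : β}
    (hf : ∀ a b, f a = f b → a = b ∨ f a = z) (A B : Set α) :
    f '' A ∩ f '' B ⊆ insert z (f '' (A ∩ B)) := by
  rintro _ ⟨⟨a, ha, rfl⟩, b, hb, hba⟩
  rcases hf b a hba with rfl | hb_zero
  · exact Or.inr ⟨b, ⟨ha, hb⟩, rfl⟩
  · exact Or.inl (hba ▸ hb_zero)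

theorem stmt1_general {S : Type*} [Semigroup S] (I : Set S) (hne : I.Nonempty)
    (hr : ∀ a ∈ I, ∀ s : S, a * s ∈ I)
    (c : Con S) (hc : ∀ a b : S, c a b ↔ a = b ∨ (a ∈ I ∧ b ∈ I))
    (hS : RIH S) : RIH c.Quotient := by
  obtain ⟨i, hi⟩ := hne
  set π := c.mkMulHom
  have hπ : Surjective π := Quotient.mk_surjective
  have hπI : ∀ a ∈ I, π a = π i := fun a ha => c.eq.mpr ((hc a i).mpr (Or.inr ⟨ha, hi⟩))
  have hzero : ∀ q, π i * q = π i := by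
    rintro ⟨s⟩
    exact hπI _ (hr i hi s)
  have hfiber : ∀ a b, π a = π b → a = b ∨ π a = π i := fun a b hab =>
    ((hc a b).mp (c.eq.mp hab)).imp id fun h => hπI a h.1
  intro A B hA hB
  obtain ⟨A', hA', rfl⟩ := hA.exists_image_eq π hπ
  obtain ⟨B', hB', rfl⟩ := hB.exists_image_eq π hπ
  have hK := (hS A' B' hA' hB').image π hπ
  have hsub := Set.image_inter_subset_insert π hfiber A' B'
  by_cases hzero_mem : π i ∈ π '' A' ∩ π '' B'
  · convert hK.insert_of_left_zero hzero using 1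
    exact hsub.antisymm (Set.insert_subset hzero_mem (Set.image_inter_subset π A' B'))
  · convert hK using 1
    refine subset_antisymm (fun q hq => ?_) (Set.image_inter_subset π A' B')
    exact (hsub hq).resolve_left (ne_of_mem_of_not_mem hq hzero_mem)

theorem stmt1 {S : Type*} [Semigroup S] (I : Set S) (hne : I.Nonempty)
    (hl : ∀ s : S, ∀ a ∈ I, s * a ∈ I) (hr : ∀ a ∈ I, ∀ s : S, a * s ∈ I)
    (c : Con S) (hc : ∀ a b : S, c a b ↔ a = b ∨ (a ∈ I ∧ b ∈ I))
    (hS : RIH S) : RIH c.Quotient :=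
  stmt1_general I hne hr c hc hS
end

section
/- Let S be a semigroup and T a subsemigroup of S such that the complement S \ T is a two-sided ideal of S. If S is right ideal Howson, then T is right ideal Howson. -/
namespace Subsemigroup

variable {S : Type*} [Semigroup S] (T : Subsemigroup S)
  (hT : ∀ x y : S, x * y ∈ T → x ∈ T ∧ y ∈ T)
include hT

theorem preimage_val_RS1 (Z : Set S) :
    (Subtype.val : T → S) ⁻¹' RS1 Z = RS1 (Subtype.val ⁻¹' Z : Set T) := by
  ext t
  simp only [RS1, Set.mem_preimage, Set.mem_union, Set.mem_ofPred_eq]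
  constructor
  · rintro (ht | ⟨z, hz, s, hts⟩)
    · exact Or.inl ht
    · obtain ⟨hzT, hsT⟩ := hT z s (hts ▸ t.2)
      exact Or.inr ⟨⟨z, hzT⟩, hz, ⟨s, hsT⟩, Subtype.ext hts⟩
  · rintro (ht | ⟨z, hz, s, rfl⟩)
    · exact Or.inl ht
    · exact Or.inr ⟨z, hz, s, rfl⟩

theorem fgRightIdeal_preimage_val {I : Set S} (hI : FGRightIdeal I) :
    FGRightIdeal ((Subtype.val : T → S) ⁻¹' I) := by
  obtain ⟨Z, rfl⟩ := hI
  refine ⟨Z.preimage Subtype.val Subtype.val_injective.injOn, ?_⟩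
  rw [preimage_val_RS1 T hT, Finset.coe_preimage]

theorem exists_fgRightIdeal_preimage_val_eq {I : Set T} (hI : FGRightIdeal I) :
    ∃ J : Set S, FGRightIdeal J ∧ (Subtype.val : T → S) ⁻¹' J = I := by
  classical
  obtain ⟨X, rfl⟩ := hI
  refine ⟨RS1 ↑(X.image Subtype.val), ⟨_, rfl⟩, ?_⟩
  rw [preimage_val_RS1 T hT, Finset.coe_image,
    Set.preimage_image_eq _ Subtype.val_injective]

theorem rih_of_mul_mem (hS : RIH S) : RIH T := by
  intro I J hI hJ
  obtain ⟨I', hI', rfl⟩ := exists_fgRightIdeal_preimage_val_eq T hT hI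
  obtain ⟨J', hJ', rfl⟩ := exists_fgRightIdeal_preimage_val_eq T hT hJ
  exact fgRightIdeal_preimage_val T hT (hS I' J' hI' hJ')

end Subsemigroup

theorem Subsemigroup.mem_and_mem_of_mul_mem {S : Type*} [Semigroup S]
    (T : Subsemigroup S)
    (hl : ∀ s : S, ∀ a ∈ (↑T : Set S)ᶜ, s * a ∈ (↑T : Set S)ᶜ)
    (hr : ∀ a ∈ (↑T : Set S)ᶜ, ∀ s : S, a * s ∈ (↑T : Set S)ᶜ)
    {x y : S} (hxy : x * y ∈ T) : x ∈ T ∧ y ∈ T := by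
  by_contra h
  rcases not_and_or.mp h with hx | hy
  · exact hr x hx y hxy
  · exact hl x y hy hxy

theorem stmt3_general {S : Type*} [Semigroup S] (T : Subsemigroup S)
    (hl : ∀ s : S, ∀ a ∈ (↑T : Set S)ᶜ, s * a ∈ (↑T : Set S)ᶜ)
    (hr : ∀ a ∈ (↑T : Set S)ᶜ, ∀ s : S, a * s ∈ (↑T : Set S)ᶜ)
    (hS : RIH S) : RIH ↥T :=
  T.rih_of_mul_mem (fun _ _ => T.mem_and_mem_of_mul_mem hl hr) hS

theorem stmt3 {S : Type*} [Semigroup S] (T : Subsemigroup S)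
    (hne : ((↑T : Set S)ᶜ).Nonempty)
    (hl : ∀ s : S, ∀ a ∈ (↑T : Set S)ᶜ, s * a ∈ (↑T : Set S)ᶜ)
    (hr : ∀ a ∈ (↑T : Set S)ᶜ, ∀ s : S, a * s ∈ (↑T : Set S)ᶜ)
    (hS : RIH S) : RIH ↥T :=
  stmt3_general T hl hr hS
end

section
/- A semigroup S is right ideal Howson if and only if the semigroup S⁰ obtained from S by adjoining a zero element is right ideal Howson. -/
/-!
Every nonempty right ideal of `S⁰` contains `0`, and removing it leaves the image of a right
ideal of `S`; so `I ↦ I ∪ {0}` is an injective correspondence between the right ideals of `S`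
and the nonempty right ideals of `S⁰`. It commutes with intersections and preserves and
reflects finite generation (a generating set `X` of `I` gives the generating set `X ∪ {0}`,
and conversely the nonzero generators suffice), so the Howson property transfers both ways.
-/

open WithZero

section ZeroExt

variable {S : Type*}

def zeroExt (I : Set S) : Set (WithZero S) :=
  ((↑) '' I) ∪ {0}

lemma zeroExt_injective : Function.Injective (zeroExt : Set S → Set (WithZero S)) := by
  intro I J h
  ext a
  have := congrArg (fun K => (a : WithZero S) ∈ K) h
  simpa [zeroExt] using this

lemma zeroExt_inter (I J : Set S) : zeroExt (I ∩ J) = zeroExt I ∩ zeroExt J := by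
  ext z
  induction z using WithZero.recZeroCoe <;> simp [zeroExt]

variable [Semigroup S]

lemma RS1_empty : RS1 (∅ : Set S) = ∅ := by
  simp [RS1]

lemma fgRightIdeal_empty : FGRightIdeal (∅ : Set S) :=
  ⟨∅, by rw [Finset.coe_empty, RS1_empty]⟩

lemma RS1_withZero {Z : Set (WithZero S)} (hZ : Z.Nonempty) :
    RS1 Z = zeroExt (RS1 (((↑) : S → WithZero S) ⁻¹' Z)) := by
  ext z
  simp only [RS1, zeroExt, Set.mem_union, Set.mem_ofPred_eq, Set.mem_image, Set.mem_preimage,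
    Set.mem_singleton_iff]
  constructor
  · rintro (h | ⟨x, hx, s, rfl⟩)
    · induction z using WithZero.recZeroCoe with
      | zero => exact Or.inr rfl
      | coe a => exact Or.inl ⟨a, Or.inl h, rfl⟩
    · induction x using WithZero.recZeroCoe with
      | zero => simp
      | coe a =>
        induction s using WithZero.recZeroCoe with
        | zero => simp
        | coe b => exact Or.inl ⟨a * b, Or.inr ⟨a, hx, b, rfl⟩, coe_mul a b⟩
  · rintro (⟨a, ha | ⟨x, hx, s, rfl⟩, rfl⟩ | rfl)
    · exact Or.inl ha
    · exact Or.inr ⟨x, hx, s, coe_mul x s⟩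
    · obtain ⟨w, hw⟩ := hZ
      exact Or.inr ⟨w, hw, 0, (mul_zero w).symm⟩

lemma RS1_image_coe_union_zero (X : Set S) :
    RS1 (((↑) '' X) ∪ {0} : Set (WithZero S)) = zeroExt (RS1 X) := by
  rw [RS1_withZero ⟨0, Or.inr rfl⟩]
  congr 2
  ext a
  simp

lemma fgRightIdeal_zeroExt_iff {I : Set S} : FGRightIdeal (zeroExt I) ↔ FGRightIdeal I := by
  classical
  constructor
  · rintro ⟨Z, hZ⟩
    have hZne : (Z : Set (WithZero S)).Nonempty := by
      by_contra hc
      have h0 : (0 : WithZero S) ∈ zeroExt I := Or.inr rfl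
      rw [hZ, Set.not_nonempty_iff_eq_empty.mp hc, RS1_empty] at h0
      exact h0
    rw [RS1_withZero hZne] at hZ
    exact ⟨Z.preimage (↑) coe_injective.injOn, by
      rw [Finset.coe_preimage]; exact zeroExt_injective hZ⟩
  · rintro ⟨X, rfl⟩
    exact ⟨insert 0 (X.image (↑)), by
      rw [← RS1_image_coe_union_zero, Finset.coe_insert, Finset.coe_image, Set.insert_eq,
        Set.union_comm]⟩

lemma FGRightIdeal.eq_empty_or_eq_zeroExt {K : Set (WithZero S)} (hK : FGRightIdeal K) :
    K = ∅ ∨ ∃ I : Set S, FGRightIdeal I ∧ K = zeroExt I := by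
  obtain ⟨Z, rfl⟩ := hK
  rcases (Z : Set (WithZero S)).eq_empty_or_nonempty with hZ | hZ
  · exact Or.inl (by rw [hZ, RS1_empty])
  · exact Or.inr ⟨_, fgRightIdeal_zeroExt_iff.mp ⟨Z, (RS1_withZero hZ).symm⟩, RS1_withZero hZ⟩

end ZeroExt

theorem stmt5 {S : Type*} [Semigroup S] :
    RIH S ↔ RIH (WithZero S) := by
  constructor
  · intro h K L hK hL
    rcases hK.eq_empty_or_eq_zeroExt with rfl | ⟨I, hI, rfl⟩
    · rw [Set.empty_inter]; exact fgRightIdeal_empty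
    rcases hL.eq_empty_or_eq_zeroExt with rfl | ⟨J, hJ, rfl⟩
    · rw [Set.inter_empty]; exact fgRightIdeal_empty
    rw [← zeroExt_inter]
    exact fgRightIdeal_zeroExt_iff.mpr (h I J hI hJ)
  · intro h I J hI hJ
    rw [← fgRightIdeal_zeroExt_iff, zeroExt_inter]
    exact h _ _ (fgRightIdeal_zeroExt_iff.mpr hI) (fgRightIdeal_zeroExt_iff.mpr hJ)
end

section
/- Let S be a semigroup. If there exists a right factorisable element a ∈ S (i.e., a ∈ aS) such that the right annihilator congruence r_S(a) is finitely generated as a right congruence, then S = US¹ for some finite set U ⊆ S. -/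
/-- The right annihilator congruence `r_S(a) = {(s,t) : a*s = a*t}`. -/
def rAnn {S : Type*} [Semigroup S] (a : S) : S → S → Prop :=
  fun s t => a * s = a * t

/-- A right congruence on a semigroup: an equivalence relation compatible with
right multiplication. -/
def IsRightCong {S : Type*} [Semigroup S] (ρ : S → S → Prop) : Prop :=
  Equivalence ρ ∧ ∀ a b s : S, ρ a b → ρ (a * s) (b * s)

/-- The smallest right congruence containing the relation `X`. -/
def rcGen {S : Type*} [Semigroup S] (X : S → S → Prop) : S → S → Prop :=
  fun a b => ∀ ρ : S → S → Prop, IsRightCong ρ → (∀ x y, X x y → ρ x y) → ρ a b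

/-- A right congruence is finitely generated if it is generated by a finite
set of pairs. -/
def FGRightCong {S : Type*} [Semigroup S] (ρ : S → S → Prop) : Prop :=
  ∃ X : Finset (S × S), ρ = rcGen (fun a b => (a, b) ∈ X)

/-- A semigroup is finitely right equated if every right annihilator
congruence is finitely generated. -/
def FRE (S : Type*) [Semigroup S] : Prop :=
  ∀ a : S, FGRightCong (rAnn a)

/-! If `a = a * b`, then `(t, b * t) ∈ r_S(a)` for every `t`. A right congruence generated by
pairs from a finite set `P` only relates distinct elements that both lie in the right ideal `PS¹`
(it is contained in the Rees-type relation of that ideal), so every `t ≠ b * t` lies in `PS¹`,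
and every `t = b * t` lies in `bS`. Hence `S = US¹` for `U = P ∪ {b}`. -/

section

variable {S : Type*} [Semigroup S]

theorem mul_mem_RS1 {P : Set S} {s : S} (hs : s ∈ RS1 P) (u : S) : s * u ∈ RS1 P := by
  rcases hs with hs | ⟨x, hx, v, rfl⟩
  · exact Or.inr ⟨s, hs, u, rfl⟩
  · exact Or.inr ⟨x, hx, v * u, mul_assoc x v u⟩

def eqOrBothMem (I : Set S) (s t : S) : Prop :=
  s = t ∨ (s ∈ I ∧ t ∈ I)

theorem isRightCong_eqOrBothMem {I : Set S} (hI : ∀ s ∈ I, ∀ u, s * u ∈ I) :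
    IsRightCong (eqOrBothMem I) := by
  refine ⟨⟨fun _ => Or.inl rfl, ?_, ?_⟩, ?_⟩
  · rintro s t (rfl | ⟨hs, ht⟩)
    exacts [Or.inl rfl, Or.inr ⟨ht, hs⟩]
  · rintro s t r (rfl | ⟨hs, ht⟩) htr
    · exact htr
    · rcases htr with rfl | ⟨-, hr⟩
      exacts [Or.inr ⟨hs, ht⟩, Or.inr ⟨hs, hr⟩]
  · rintro s t u (rfl | ⟨hs, ht⟩)
    exacts [Or.inl rfl, Or.inr ⟨hI s hs u, hI t ht u⟩]

theorem rcGen_eq_or_mem_RS1 {X : S → S → Prop} {P : Set S} (hP : ∀ x y, X x y → x ∈ P ∧ y ∈ P)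
    {s t : S} (h : rcGen X s t) : s = t ∨ (s ∈ RS1 P ∧ t ∈ RS1 P) :=
  h (eqOrBothMem (RS1 P)) (isRightCong_eqOrBothMem fun _ hs u => mul_mem_RS1 hs u)
    fun x y hxy => Or.inr ⟨Or.inl (hP x y hxy).1, Or.inl (hP x y hxy).2⟩

theorem rAnn_mul_left_of_eq_mul {a b : S} (hb : a = a * b) (t : S) : rAnn a t (b * t) := by
  rw [rAnn, ← mul_assoc, ← hb]

end

theorem stmt11 {S : Type*} [Semigroup S] (a : S) (ha : ∃ s : S, a = a * s)
    (hfg : FGRightCong (rAnn a)) :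
    ∃ U : Finset S, RS1 (↑U : Set S) = Set.univ := by
  classical
  obtain ⟨b, hb⟩ := ha
  obtain ⟨X, hX⟩ := hfg
  let U : Finset S := insert b (X.image Prod.fst ∪ X.image Prod.snd)
  have hXU : ∀ x y, (x, y) ∈ X → x ∈ (U : Set S) ∧ y ∈ (U : Set S) := fun x y hxy => by
    simp only [U, Finset.coe_insert, Finset.coe_union, Finset.coe_image, Set.mem_insert_iff,
      Set.mem_union, Set.mem_image]
    exact ⟨Or.inr (Or.inl ⟨_, hxy, rfl⟩), Or.inr (Or.inr ⟨_, hxy, rfl⟩)⟩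
  refine ⟨U, Set.eq_univ_of_forall fun t => ?_⟩
  have htbt : rcGen (fun x y => (x, y) ∈ X) t (b * t) := hX ▸ rAnn_mul_left_of_eq_mul hb t
  rcases rcGen_eq_or_mem_RS1 hXU htbt with heq | ⟨ht, -⟩
  · exact heq ▸ mul_mem_RS1 (Or.inl (Finset.mem_insert_self b _)) t
  · exact ht
end

section
/- A regular semigroup S (i.e., a semigroup in which every element a satisfies a = a*b*a for some b ∈ S) is finitely right equated if and only if S = US¹ for some finite set U ⊆ S. Consequently, every regular monoid is finitely right equated. -/
universe u

/-!
If `a * b * a = a`, then `a * (b * a * s) = a * s`, so every `s` is identified by `r_S(a)`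
with an element of `bS`. Were `r_S(a)` generated by finitely many pairs, the Rees right
congruence of the right ideal `US¹` (with `U` the entries of these pairs together with `b`)
would contain `r_S(a)`, which forces `S = US¹`. Conversely, if `S = US¹` then
`r_S(a)` is generated by the pairs `(u, b * a * u)`, `u ∈ U`: every `x` is congruent to
`b * a * x`, and `a * s = a * t` gives `b * a * s = b * a * t`. In a monoid `S = {1}S¹`.
-/

section RightCongruence

variable {S : Type*} [Semigroup S]

theorem rAnn_isRightCong (a : S) : IsRightCong (rAnn a) := by
  refine ⟨⟨fun _ => rfl, Eq.symm, Eq.trans⟩, fun x y s (h : a * x = a * y) => ?_⟩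
  show a * (x * s) = a * (y * s)
  rw [← mul_assoc, ← mul_assoc, h]

theorem mul_mem_RS1_s13 {V : Set S} {x : S} (hx : x ∈ RS1 V) (r : S) : x * r ∈ RS1 V := by
  rcases hx with hx | ⟨v, hv, s, rfl⟩
  · exact Or.inr ⟨x, hx, r, rfl⟩
  · exact Or.inr ⟨v, hv, s * r, mul_assoc v s r⟩

/-- The Rees right congruence of `I`, collapsing `I` to a single class. -/
def reesRel (I : Set S) (x y : S) : Prop :=
  x = y ∨ (x ∈ I ∧ y ∈ I)

theorem reesRel_isRightCong {I : Set S} (hI : ∀ x ∈ I, ∀ r : S, x * r ∈ I) :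
    IsRightCong (reesRel I) := by
  refine ⟨⟨fun _ => Or.inl rfl, ?_, ?_⟩, ?_⟩
  · rintro x y (rfl | ⟨hx, hy⟩)
    · exact Or.inl rfl
    · exact Or.inr ⟨hy, hx⟩
  · rintro x y z (rfl | ⟨hx, hy⟩) hyz
    · exact hyz
    · rcases hyz with rfl | ⟨-, hz⟩
      · exact Or.inr ⟨hx, hy⟩
      · exact Or.inr ⟨hx, hz⟩
  · rintro x y r (rfl | ⟨hx, hy⟩)
    · exact Or.inl rfl
    · exact Or.inr ⟨hI x hx r, hI y hy r⟩

theorem rAnn_mul_mul_of_mul_mul_eq_self {a b : S} (hab : a * b * a = a) (s : S) :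
    rAnn a (b * (a * s)) s := by
  show a * (b * (a * s)) = a * s
  rw [← mul_assoc, ← mul_assoc, hab]

theorem exists_RS1_eq_univ_of_fgRightCong_rAnn {a b : S} (hab : a * b * a = a)
    (hfg : FGRightCong (rAnn a)) : ∃ U : Finset S, RS1 (↑U : Set S) = Set.univ := by
  classical
  obtain ⟨X, hX⟩ := hfg
  set U := insert b (X.image Prod.fst ∪ X.image Prod.snd)
  refine ⟨U, Set.eq_univ_of_forall fun s => ?_⟩
  have hentries : ∀ p ∈ X, p.1 ∈ U ∧ p.2 ∈ U := fun p hp =>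
    ⟨Finset.mem_insert_of_mem (Finset.mem_union_left _ (Finset.mem_image_of_mem _ hp)),
      Finset.mem_insert_of_mem (Finset.mem_union_right _ (Finset.mem_image_of_mem _ hp))⟩
  have hgen : ∀ x y, (x, y) ∈ X → reesRel (RS1 (↑U : Set S)) x y := fun x y hxy =>
    Or.inr ⟨Or.inl (hentries _ hxy).1, Or.inl (hentries _ hxy).2⟩
  have hpair := rAnn_mul_mul_of_mul_mul_eq_self hab s
  rw [hX] at hpair
  rcases hpair _ (reesRel_isRightCong fun x hx r => mul_mem_RS1_s13 hx r) hgen with h | ⟨-, hs⟩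
  · rw [← h]
    exact Or.inr ⟨b, Finset.mem_insert_self _ _, a * s, rfl⟩
  · exact hs

theorem rAnn_eq_rcGen_of_RS1_eq_univ [DecidableEq S] {a b : S} (hab : a * b * a = a)
    {U : Finset S} (hU : RS1 (↑U : Set S) = Set.univ) :
    rAnn a = rcGen (fun x y => (x, y) ∈ U.image fun u => (u, b * (a * u))) := by
  funext s t
  refine propext ⟨fun hst ρ hρ hXρ => ?_, fun h => h _ (rAnn_isRightCong a) ?_⟩
  · have hgen : ∀ u ∈ U, ρ u (b * (a * u)) := fun u hu =>
      hXρ _ _ (Finset.mem_image_of_mem _ hu)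
    have hall : ∀ x : S, ρ x (b * (a * x)) := by
      intro x
      rcases hU ▸ Set.mem_univ x with hx | ⟨u, hu, r, rfl⟩
      · exact hgen x hx
      · simpa only [mul_assoc] using hρ.2 _ _ r (hgen u hu)
    have hst' : b * (a * s) = b * (a * t) := by
      rw [show a * s = a * t from hst]
    exact hρ.1.trans (hst' ▸ hall s) (hρ.1.symm (hall t))
  · intro x y hxy
    obtain ⟨u, -, hu⟩ := Finset.mem_image.mp hxy
    obtain ⟨rfl, rfl⟩ := Prod.mk.inj hu
    exact (rAnn_mul_mul_of_mul_mul_eq_self hab u).symm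

theorem fre_iff_exists_RS1_eq_univ_of_isRegular (hreg : ∀ a : S, ∃ b : S, a = a * b * a) :
    FRE S ↔ ∃ U : Finset S, RS1 (↑U : Set S) = Set.univ := by
  constructor
  · intro hfre
    cases isEmpty_or_nonempty S with
    | inl _ => exact ⟨∅, Set.eq_univ_of_forall isEmptyElim⟩
    | inr hne =>
      obtain ⟨a⟩ := hne
      obtain ⟨b, hb⟩ := hreg a
      exact exists_RS1_eq_univ_of_fgRightCong_rAnn hb.symm (hfre a)
  · rintro ⟨U, hU⟩ a
    classical
    obtain ⟨b, hb⟩ := hreg a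
    exact ⟨_, rAnn_eq_rcGen_of_RS1_eq_univ hb.symm hU⟩

end RightCongruence

theorem RS1_one_eq_univ (M : Type*) [Monoid M] : RS1 ({1} : Set M) = Set.univ :=
  Set.eq_univ_of_forall fun x => Or.inr ⟨1, rfl, x, (one_mul x).symm⟩

theorem stmt13 :
    (∀ (S : Type u) [Semigroup S], (∀ a : S, ∃ b : S, a = a * b * a) →
      (FRE S ↔ ∃ U : Finset S, RS1 (↑U : Set S) = Set.univ)) ∧
    (∀ (M : Type u) [Monoid M], (∀ a : M, ∃ b : M, a = a * b * a) → FRE M) := by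
  refine ⟨fun S _ => fre_iff_exists_RS1_eq_univ_of_isRegular, fun M _ hreg => ?_⟩
  rw [fre_iff_exists_RS1_eq_univ_of_isRegular hreg]
  exact ⟨{1}, by simpa only [Finset.coe_singleton] using RS1_one_eq_univ M⟩
end
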